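/- arXiv:2109.13876 — 5 statements merged into one kernel-verified Lean document; each statement's English description precedes it below -/
import Mathlib

section
/- Let n, k be positive integers, v = (v_1, …, v_k) with 0 ≤ v_j ≤ n, and 0 ≤ i ≤ n. The number of k-tuples (U_1, …, U_k) of subsets of {1, …, n} with |U_j| = v_j for all j and |∩_{j=1}^{k} U_j| = i equals C(n,i) · ∑_{m=0}^{n−i} (−1)^{n−i+m} · C(n−i, m) · ∏_{j=1}^{k} C(m, n−v_j). -/
open Finset

section Aux

variable {α : Type*} [Fintype α] [DecidableEq α] {k : ℕ}

/-- Counting tuples of subsets of `T` with prescribed cardinalities. -/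
private lemma aux_subset_count (T : Finset α) (c : Fin k → ℕ) :
    (Finset.univ.filter (fun W : Fin k → Finset α => ∀ j, W j ⊆ T ∧ (W j).card = c j)).card
      = ∏ j, T.card.choose (c j) := by
  have h : (Finset.univ.filter (fun W : Fin k → Finset α => ∀ j, W j ⊆ T ∧ (W j).card = c j))
      = Fintype.piFinset (fun j => T.powersetCard (c j)) := by
    ext W
    simp [Fintype.mem_piFinset, Finset.mem_powersetCard]
  rw [h, Fintype.card_piFinset]
  simp [Finset.card_powersetCard]

/-- Möbius-type alternating sum over subsets between `A` and `S`. -/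
private lemma aux_moebius_sum {A S : Finset α} (hAS : A ⊆ S) :
    ∑ T ∈ S.powerset.filter (fun T => A ⊆ T), (-1 : ℤ) ^ (S.card - T.card)
      = if A = S then 1 else 0 := by
  have hbij : ∑ T ∈ S.powerset.filter (fun T => A ⊆ T), (-1 : ℤ) ^ (S.card - T.card)
      = ∑ R ∈ (S \ A).powerset, (-1 : ℤ) ^ ((S \ A).card - R.card) := by
    refine Finset.sum_nbij' (fun T => T \ A) (fun R => R ∪ A) ?_ ?_ ?_ ?_ ?_
    · intro T hT
      rw [mem_filter, mem_powerset] at hT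
      exact mem_powerset.2 (sdiff_subset_sdiff hT.1 Subset.rfl)
    · intro R hR
      rw [mem_powerset] at hR
      rw [mem_filter, mem_powerset]
      exact ⟨union_subset (hR.trans sdiff_subset) hAS, subset_union_right⟩
    · intro T hT
      rw [mem_filter] at hT
      show T \ A ∪ A = T
      exact sdiff_union_of_subset hT.2
    · intro R hR
      rw [mem_powerset] at hR
      have hdisj : Disjoint R A := Finset.sdiff_disjoint.mono_left hR
      show (R ∪ A) \ A = R
      rw [union_sdiff_distrib, sdiff_self]
      simp [hdisj.sdiff_eq_left]
    · intro T hT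
      rw [mem_filter, mem_powerset] at hT
      congr 1
      rw [card_sdiff_of_subset hAS, card_sdiff_of_subset hT.2]
      have h1 := card_le_card hT.1
      have h2 := card_le_card hT.2
      omega
  rw [hbij]
  have h1 : ∀ R ∈ (S \ A).powerset, (-1 : ℤ) ^ ((S \ A).card - R.card)
      = (-1 : ℤ) ^ (S \ A).card * (-1 : ℤ) ^ R.card := by
    intro R hR
    have hle := card_le_card (mem_powerset.1 hR)
    rw [← pow_add]
    have h2 : (S \ A).card - R.card + 2 * R.card = (S \ A).card + R.card := by omega
    calc (-1 : ℤ) ^ ((S \ A).card - R.card)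
        = (-1 : ℤ) ^ ((S \ A).card - R.card) * ((-1 : ℤ) ^ 2) ^ R.card := by norm_num
      _ = (-1 : ℤ) ^ ((S \ A).card - R.card + 2 * R.card) := by
          rw [← pow_mul, ← pow_add]
      _ = (-1 : ℤ) ^ ((S \ A).card + R.card) := by rw [h2]
  rw [Finset.sum_congr rfl h1, ← Finset.mul_sum, Finset.sum_powerset_neg_one_pow_card]
  by_cases h : A = S
  · have h0 : S \ A = ∅ := by simp [h]
    simp [h0, h]
  · have hne : S \ A ≠ ∅ := by
      rw [Ne, Finset.sdiff_eq_empty_iff_subset]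
      intro hsub
      exact h (Subset.antisymm hAS hsub)
    simp [hne, h]

/-- Number of tuples with prescribed cardinalities whose union is exactly `S`. -/
private lemma aux_exact_union (S : Finset α) (c : Fin k → ℕ) :
    ((Finset.univ.filter (fun W : Fin k → Finset α =>
        (∀ j, (W j).card = c j) ∧ Finset.univ.sup W = S)).card : ℤ)
      = ∑ T ∈ S.powerset, (-1 : ℤ) ^ (S.card - T.card) * ∏ j, (T.card.choose (c j) : ℤ) := by
  have step1 : ∑ T ∈ S.powerset, (-1 : ℤ) ^ (S.card - T.card) * ∏ j, (T.card.choose (c j) : ℤ)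
      = ∑ T ∈ S.powerset,
          ∑ _W ∈ Finset.univ.filter (fun W : Fin k → Finset α => ∀ j, W j ⊆ T ∧ (W j).card = c j),
            (-1 : ℤ) ^ (S.card - T.card) := by
    refine Finset.sum_congr rfl fun T _ => ?_
    rw [Finset.sum_const, nsmul_eq_mul, aux_subset_count, mul_comm]
    push_cast
    ring
  rw [step1]
  rw [Finset.sum_comm'
    (s' := fun W : Fin k → Finset α => S.powerset.filter (fun T => Finset.univ.sup W ⊆ T))
    (t' := Finset.univ.filter (fun W : Fin k → Finset α =>
      (∀ j, (W j).card = c j) ∧ Finset.univ.sup W ⊆ S))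
    (by
      intro T W
      constructor
      · rintro ⟨hT, hW⟩
        rw [mem_powerset] at hT
        simp only [mem_filter, mem_univ, true_and] at hW
        have hsupT : Finset.univ.sup W ⊆ T :=
          Finset.sup_le fun j _ => (hW j).1
        refine ⟨mem_filter.2 ⟨mem_powerset.2 hT, hsupT⟩,
          mem_filter.2 ⟨mem_univ _, fun j => (hW j).2, hsupT.trans hT⟩⟩
      · rintro ⟨hT, hW⟩
        rw [mem_filter, mem_powerset] at hT
        simp only [mem_filter, mem_univ, true_and] at hW
        refine ⟨mem_powerset.2 hT.1, mem_filter.2 ⟨mem_univ _, fun j => ⟨?_, hW.1 j⟩⟩⟩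
        exact (Finset.le_sup (mem_univ j)).trans hT.2)]
  have step2 : ∀ W ∈ Finset.univ.filter (fun W : Fin k → Finset α =>
      (∀ j, (W j).card = c j) ∧ Finset.univ.sup W ⊆ S),
      ∑ T ∈ S.powerset.filter (fun T => Finset.univ.sup W ⊆ T),
        (-1 : ℤ) ^ (S.card - T.card)
      = if Finset.univ.sup W = S then 1 else 0 := by
    intro W hW
    rw [mem_filter] at hW
    exact aux_moebius_sum hW.2.2
  rw [Finset.sum_congr rfl step2, Finset.sum_boole]
  congr 2
  ext W
  simp only [mem_filter, mem_univ, true_and]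
  constructor
  · rintro ⟨h1, rfl⟩
    exact ⟨⟨h1, Subset.rfl⟩, rfl⟩
  · rintro ⟨⟨h1, _⟩, h2⟩
    exact ⟨h1, h2⟩

end Aux

open Finset in
theorem count_fixed_intersection_formula (n k : ℕ) (hn : 0 < n) (hk : 0 < k)
    (v : Fin k → ℕ) (hv : ∀ j, v j ≤ n) (i : ℕ) (hi : i ≤ n) :
    (((Finset.univ.filter (fun U : Fin k → Finset (Fin n) =>
        (∀ j, (U j).card = v j) ∧ (Finset.univ.inf U).card = i)).card : ℤ)) =
      (n.choose i : ℤ) *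
        ∑ m ∈ Finset.range (n - i + 1),
          (-1 : ℤ) ^ (n - i + m) * ((n - i).choose m) *
            ∏ j, ((m.choose (n - v j) : ℤ)) := by
  classical
  -- Step 1: complement bijection
  have hcompl : (Finset.univ.filter (fun U : Fin k → Finset (Fin n) =>
        (∀ j, (U j).card = v j) ∧ (Finset.univ.inf U).card = i)).card
      = (Finset.univ.filter (fun W : Fin k → Finset (Fin n) =>
        (∀ j, (W j).card = n - v j) ∧ (Finset.univ.sup W).card = n - i)).card := by
    refine Finset.card_nbij' (fun U j => (U j)ᶜ) (fun W j => (W j)ᶜ) ?_ ?_ ?_ ?_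
    · intro U hU
      rw [Finset.mem_coe, mem_filter] at hU ⊢
      obtain ⟨_, hUc, hUi⟩ := hU
      have hsup : Finset.univ.sup (fun j => (U j)ᶜ) = (Finset.univ.inf U)ᶜ :=
        (Finset.compl_inf _ _).symm
      refine ⟨mem_univ _, fun j => ?_, ?_⟩
      · rw [Finset.card_compl, Fintype.card_fin, hUc j]
      · rw [hsup, Finset.card_compl, Fintype.card_fin, hUi]
    · intro W hW
      rw [Finset.mem_coe, mem_filter] at hW ⊢
      obtain ⟨_, hWc, hWs⟩ := hW
      have hinf : Finset.univ.inf (fun j => (W j)ᶜ) = (Finset.univ.sup W)ᶜ :=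
        (Finset.compl_sup _ _).symm
      refine ⟨mem_univ _, fun j => ?_, ?_⟩
      · rw [Finset.card_compl, Fintype.card_fin, hWc j]
        have := hv j
        omega
      · rw [hinf, Finset.card_compl, Fintype.card_fin, hWs]
        omega
    · intro U _; funext j; simp
    · intro W _; funext j; simp
  rw [hcompl]
  -- Step 2: partition by the union
  have hfib : (Finset.univ.filter (fun W : Fin k → Finset (Fin n) =>
        (∀ j, (W j).card = n - v j) ∧ (Finset.univ.sup W).card = n - i)).card
      = ∑ S ∈ Finset.powersetCard (n - i) (Finset.univ : Finset (Fin n)),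
          (Finset.univ.filter (fun W : Fin k → Finset (Fin n) =>
            (∀ j, (W j).card = n - v j) ∧ Finset.univ.sup W = S)).card := by
    rw [Finset.card_eq_sum_card_fiberwise
      (f := fun W : Fin k → Finset (Fin n) => Finset.univ.sup W)
      (t := Finset.powersetCard (n - i) (Finset.univ : Finset (Fin n)))
      (fun W hW => by
        rw [Finset.mem_coe, mem_filter] at hW
        exact Finset.mem_powersetCard_univ.2 hW.2.2)]
    refine Finset.sum_congr rfl fun S hS => ?_
    congr 1
    ext W
    simp only [mem_filter, mem_univ, true_and]
    constructor
    · rintro ⟨⟨hc', _⟩, heq⟩; exact ⟨hc', heq⟩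
    · rintro ⟨hc', heq⟩
      exact ⟨⟨hc', heq ▸ Finset.mem_powersetCard_univ.1 hS⟩, heq⟩
  rw [hfib]
  -- Step 3: evaluate each fiber and regroup
  have hfiber_val : ∀ S ∈ Finset.powersetCard (n - i) (Finset.univ : Finset (Fin n)),
      ((Finset.univ.filter (fun W : Fin k → Finset (Fin n) =>
        (∀ j, (W j).card = n - v j) ∧ Finset.univ.sup W = S)).card : ℤ)
      = ∑ m ∈ Finset.range (n - i + 1),
          (-1 : ℤ) ^ (n - i + m) * ((n - i).choose m) * ∏ j, ((m.choose (n - v j) : ℤ)) := by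
    intro S hS
    have hScard : S.card = n - i := Finset.mem_powersetCard_univ.1 hS
    rw [aux_exact_union S (fun j => n - v j), Finset.sum_powerset, hScard]
    refine Finset.sum_congr rfl ?_
    intro m hm
    have hm' : m ≤ n - i := Nat.lt_succ_iff.mp (Finset.mem_range.mp hm)
    have hval : ∀ T ∈ Finset.powersetCard m S,
        (-1 : ℤ) ^ (n - i - T.card) * ∏ j, (T.card.choose (n - v j) : ℤ)
        = (-1 : ℤ) ^ (n - i + m) * ∏ j, ((m.choose (n - v j) : ℤ)) := by
      intro T hT
      rw [Finset.mem_powersetCard] at hT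
      rw [hT.2]
      congr 1
      have hexp : n - i - m + 2 * m = n - i + m := by
        rw [two_mul, ← add_assoc, Nat.sub_add_cancel hm']
      rw [← hexp, pow_add, pow_mul]
      norm_num
    rw [Finset.sum_congr rfl hval, Finset.sum_const, Finset.card_powersetCard, hScard,
      nsmul_eq_mul]
    push_cast
    ring
  rw [Nat.cast_sum, Finset.sum_congr rfl hfiber_val, Finset.sum_const, Finset.card_powersetCard,
    Finset.card_univ, Fintype.card_fin, nsmul_eq_mul, Nat.choose_symm hi]
end

section
/- For n ≥ 1 and v = (v_1,…,v_k) with 0 ≤ v_j ≤ n for all j, the quantity a(n, v) = ∑_{m=0}^{n} (−1)^{n+m} C(n,m) ∏_{j=1}^{k} C(m, n−v_j) is nonnegative. -/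
open Finset

lemma my_inner_sum (n : ℕ) (U : Finset (Fin n)) :
    ∑ M ∈ (univ : Finset (Fin n)).powerset,
      (if U ⊆ M then (-1 : ℤ) ^ (n + M.card) else 0)
    = if U = univ then 1 else 0 := by
  classical
  rw [← Finset.sum_filter]
  rw [Finset.sum_nbij' (i := fun M => M \ U) (j := fun N => N ∪ U)
      (t := Uᶜ.powerset) (g := fun N => (-1 : ℤ) ^ (n + U.card + N.card))]
  · simp only [pow_add]
    rw [← Finset.mul_sum, sum_powerset_neg_one_pow_card]
    by_cases h : U = univ
    · have hc : U.card = n := by simp [h]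
      have : Uᶜ = ∅ := by simp [h]
      simp [h, this, hc, ← pow_add, Even.neg_one_pow (⟨n, rfl⟩ : Even (n + n))]
    · have : Uᶜ ≠ ∅ := by
        simpa [← Finset.compl_eq_empty_iff] using h
      simp [h, this]
  · intro M hM
    simp only [mem_filter, mem_powerset] at hM
    simp only [mem_powerset]
    intro x hx
    simp only [mem_sdiff] at hx
    simpa using hx.2
  · intro N hN
    simp only [mem_filter, mem_powerset]
    exact ⟨subset_univ _, subset_union_right⟩
  · intro M hM
    simp only [mem_filter] at hM
    exact sdiff_union_of_subset hM.2
  · intro N hN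
    simp only [mem_powerset] at hN
    have hd : Disjoint N U := disjoint_left.mpr fun x hx => by
      have := hN hx; simpa using this
    rw [union_sdiff_right]
    exact sdiff_eq_self_of_disjoint hd
  · intro M hM
    simp only [mem_filter, mem_powerset] at hM
    have hle := card_le_card hM.2
    congr 1
    rw [card_sdiff_of_subset hM.2]
    omega

open Finset in
theorem formula_nonneg (n k : ℕ) (hn : 1 ≤ n)
    (v : Fin k → ℕ) (hv : ∀ j, v j ≤ n) :
    0 ≤ ∑ m ∈ Finset.range (n + 1),
        (-1 : ℤ) ^ (n + m) * (n.choose m) * ∏ j, ((m.choose (n - v j) : ℤ)) := by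
  classical
  set w : Fin k → ℕ := fun j => n - v j with hw
  set A : Finset (Fin k → Finset (Fin n)) :=
    Fintype.piFinset (fun j => (univ : Finset (Fin n)).powersetCard (w j)) with hA
  have hstep2 : ∀ M : Finset (Fin n),
      (∏ j, ((M.card.choose (w j) : ℤ)))
        = ∑ S ∈ A, (if univ.biUnion S ⊆ M then (1 : ℤ) else 0) := by
    intro M
    rw [Finset.sum_boole]
    have hfe : A.filter (fun S => univ.biUnion S ⊆ M)
        = Fintype.piFinset (fun j => M.powersetCard (w j)) := by
      ext S
      simp only [hA, mem_filter, Fintype.mem_piFinset, mem_powersetCard,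
        Finset.biUnion_subset, mem_univ, forall_true_left, subset_univ, true_and]
      constructor
      · rintro ⟨h1, h2⟩ j
        exact ⟨h2 j, h1 j⟩
      · intro h
        exact ⟨fun j => (h j).2, fun j => (h j).1⟩
    rw [hfe, Fintype.card_piFinset]
    push_cast
    refine Finset.prod_congr rfl fun j _ => ?_
    rw [card_powersetCard]
  have key : ∑ m ∈ Finset.range (n + 1),
        (-1 : ℤ) ^ (n + m) * (n.choose m) * ∏ j, ((m.choose (w j) : ℤ))
      = ∑ M ∈ (univ : Finset (Fin n)).powerset,
          (-1 : ℤ) ^ (n + M.card) * ∏ j, ((M.card.choose (w j) : ℤ)) := by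
    rw [Finset.sum_powerset]
    have hcard : (univ : Finset (Fin n)).card = n := by simp
    rw [hcard]
    refine Finset.sum_congr rfl fun m hm => ?_
    have h2 : ∑ M ∈ powersetCard m (univ : Finset (Fin n)),
        (-1 : ℤ) ^ (n + M.card) * ∏ j, ((M.card.choose (w j) : ℤ))
      = ∑ _M ∈ powersetCard m (univ : Finset (Fin n)),
        (-1 : ℤ) ^ (n + m) * ∏ j, ((m.choose (w j) : ℤ)) :=
      Finset.sum_congr rfl fun M hM => by rw [(mem_powersetCard.1 hM).2]
    rw [h2, Finset.sum_const, card_powersetCard, hcard, nsmul_eq_mul]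
    ring
  rw [key]
  calc (0 : ℤ) ≤ ∑ S ∈ A, (if univ.biUnion S = univ then (1 : ℤ) else 0) := by
        refine Finset.sum_nonneg fun S _ => ?_
        split <;> norm_num
    _ = ∑ S ∈ A, ∑ M ∈ (univ : Finset (Fin n)).powerset,
          (if univ.biUnion S ⊆ M then (-1 : ℤ) ^ (n + M.card) else 0) := by
        refine Finset.sum_congr rfl fun S _ => ?_
        rw [my_inner_sum]
    _ = ∑ M ∈ (univ : Finset (Fin n)).powerset,
          (-1 : ℤ) ^ (n + M.card) * ∏ j, ((M.card.choose (w j) : ℤ)) := by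
        rw [Finset.sum_comm]
        refine Finset.sum_congr rfl fun M _ => ?_
        rw [hstep2, Finset.mul_sum]
        refine Finset.sum_congr rfl fun S _ => ?_
        split <;> simp
end

section
/- Let n, k, i be integers with n ≥ 1, k ≥ 1, 0 ≤ i ≤ n, and v = (v_1,…,v_k) with 0 ≤ v_j ≤ n. Then ∑_{u=i}^{n} C(n,u)·a(n−u, (v_1−u,…,v_k−u)) = ∑_{m=max_j(n−v_j)}^{n−i} (−1)^m C(n,m) · [ (−1)^{max_j(n−v_j)} C(n−m−1, n−max_j(n−v_j)) + (−1)^{n−i} C(n−m−1, i−1) ] · ∏_{j=1}^{k} C(m, n−v_j). -/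
open Finset

/-- Generalized binomial coefficient `C(a, b)` for integer indices: `0` when
the lower index is negative, and otherwise the falling factorial
`a (a−1) ⋯ (a−b+1) / b!` (which is `0` whenever `0 ≤ a < b`, i.e. when the
lower index exceeds a nonnegative upper index). -/
def zchoose (a b : ℤ) : ℤ :=
  if 0 ≤ b then (∏ t ∈ Finset.range b.toNat, (a - t)) / (b.toNat).factorial else 0

/-- `aFormula k m w` is the formula
`∑_{l=0}^{m} (−1)^{m+l} C(m,l) ∏_j C(l, m−w_j)` for the number of `k`-tuples of
subsets of an `m`-element set with cardinalities `w_1,…,w_k` and empty mutual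
intersection; by convention it is `0` if some `w j < 0`. -/
def aFormula (k m : ℕ) (w : Fin k → ℤ) : ℤ :=
  if ∀ j, 0 ≤ w j then
    ∑ l ∈ Finset.range (m + 1),
      (-1 : ℤ) ^ (m + l) * (m.choose l) * ∏ j, zchoose l ((m : ℤ) - w j)
  else 0

lemma negpow_congr {a b : ℕ} (h : a % 2 = b % 2) : (-1:ℤ)^a = (-1)^b := by
  rcases Nat.even_or_odd a with ha | ha
  · have hb : Even b := Nat.even_iff.mpr (by rw [← h]; exact Nat.even_iff.mp ha)
    rw [ha.neg_one_pow, hb.neg_one_pow]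
  · have hb : Odd b := Nat.odd_iff.mpr (by rw [← h]; exact Nat.odd_iff.mp ha)
    rw [ha.neg_one_pow, hb.neg_one_pow]

lemma zchoose_natCast (a b : ℕ) : zchoose (a:ℤ) (b:ℤ) = (a.choose b : ℤ) := by
  unfold zchoose
  rw [if_pos (Int.natCast_nonneg b), Int.toNat_natCast]
  by_cases h : b ≤ a
  · have hp : ∏ t ∈ Finset.range b, ((a:ℤ) - (t:ℤ)) = ((a.descFactorial b : ℕ) : ℤ) := by
      rw [Nat.descFactorial_eq_prod_range, Nat.cast_prod]
      refine Finset.prod_congr rfl fun t ht => ?_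
      have := Finset.mem_range.mp ht
      omega
    rw [hp, Nat.descFactorial_eq_factorial_mul_choose]
    push_cast
    rw [Int.mul_ediv_cancel_left _ (by exact_mod_cast (Nat.factorial_pos b).ne')]
  · rw [Finset.prod_eq_zero (Finset.mem_range.mpr (by omega : a < b)) (by simp),
      Nat.choose_eq_zero_of_lt (by omega)]
    simp

lemma zchoose_neg_one_left (b : ℕ) : zchoose (-1) (b:ℤ) = (-1)^b := by
  unfold zchoose
  rw [if_pos (Int.natCast_nonneg b), Int.toNat_natCast]
  have hp : ∏ t ∈ Finset.range b, ((-1:ℤ) - (t:ℤ)) = (-1)^b * (b.factorial : ℤ) := by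
    induction b with
    | zero => simp
    | succ b ih =>
      rw [Finset.prod_range_succ, ih, Nat.factorial_succ]
      push_cast; ring
  rw [hp, Int.mul_ediv_cancel _ (by exact_mod_cast (Nat.factorial_pos b).ne')]

lemma zchoose_neg_right (a : ℤ) {b : ℤ} (h : b < 0) : zchoose a b = 0 :=
  if_neg (not_le.mpr h)

lemma alt_sum_choose (N r : ℕ) :
    ∑ u ∈ Finset.range (r+1), (-1:ℤ)^u * (N.choose u : ℤ)
      = (-1)^r * zchoose ((N:ℤ) - 1) (r:ℤ) := by
  induction r with
  | zero =>
    simp only [Finset.sum_range_one, pow_zero, one_mul, Nat.choose_zero_right, Nat.cast_one,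
      Nat.cast_zero]
    unfold zchoose
    norm_num
  | succ r ih =>
    rw [Finset.sum_range_succ, ih]
    have key : zchoose ((N:ℤ)-1) (((r+1:ℕ)):ℤ)
        = ((N.choose (r+1) : ℕ) : ℤ) - zchoose ((N:ℤ)-1) (r:ℤ) := by
      cases N with
      | zero =>
        have h0 : ((0:ℕ):ℤ) - 1 = -1 := by norm_num
        rw [h0, zchoose_neg_one_left, zchoose_neg_one_left,
          Nat.choose_eq_zero_of_lt (by omega)]
        rw [pow_succ]
        push_cast; ring
      | succ N' =>
        have h1 : ((N'+1:ℕ):ℤ) - 1 = ((N':ℕ):ℤ) := by push_cast; ring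
        rw [h1, zchoose_natCast, zchoose_natCast, Nat.choose_succ_succ]
        push_cast; ring
    rw [key, pow_succ]
    ring

lemma choose_helper {n u l : ℕ} (h : u + l ≤ n) :
    n.choose u * (n-u).choose l = n.choose l * (n-l).choose u := by
  have h1 := Nat.choose_mul (n := n) (k := u + l) (s := u) (Nat.le_add_right u l)
  have h2 := Nat.choose_mul (n := n) (k := u + l) (s := l) (Nat.le_add_left l u)
  rw [Nat.add_sub_cancel_left] at h1
  rw [Nat.add_sub_cancel] at h2
  have h3 : (u+l).choose u = (u+l).choose l := by
    rw [← Nat.choose_symm (Nat.le_add_right u l), Nat.add_sub_cancel_left]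
  rw [← h1, ← h2, h3]

theorem cdf_closed_form (n k i : ℕ) (hn : 1 ≤ n) (hk : 1 ≤ k) (hi : i ≤ n)
    (v : Fin k → ℕ) (hv : ∀ j, v j ≤ n) :
    ∑ u ∈ Finset.Icc i n,
        (n.choose u : ℤ) * aFormula k (n - u) (fun j => (v j : ℤ) - u) =
      ∑ m ∈ Finset.Icc (Finset.univ.sup fun j => n - v j) (n - i),
        (-1 : ℤ) ^ m * (n.choose m) *
          ((-1 : ℤ) ^ (Finset.univ.sup fun j => n - v j) *
              zchoose ((n : ℤ) - m - 1) ((n : ℤ) - (Finset.univ.sup fun j => n - v j)) +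
            (-1 : ℤ) ^ (n - i) * zchoose ((n : ℤ) - m - 1) ((i : ℤ) - 1)) *
          ∏ j, ((m.choose (n - v j) : ℤ)) := by
  haveI hk' : Nonempty (Fin k) := ⟨⟨0, hk⟩⟩
  set M := Finset.univ.sup (fun j => n - v j) with hMdef
  obtain ⟨j0, -, hj0⟩ := Finset.exists_mem_eq_sup (Finset.univ : Finset (Fin k))
    Finset.univ_nonempty (fun j => n - v j)
  rw [← hMdef] at hj0
  have hMn : M ≤ n := Finset.sup_le (fun j _ => Nat.sub_le n (v j))
  have hMle : ∀ j, n - v j ≤ M := fun j => Finset.le_sup (f := fun j => n - v j) (Finset.mem_univ j)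
  -- Step 1 : restrict and unfold aFormula
  have hzero1 : ∀ u ∈ Finset.Icc i n, u ∉ Finset.Icc i (n - M) →
      (n.choose u : ℤ) * aFormula k (n - u) (fun j => (v j : ℤ) - u) = 0 := by
    intro u hu hnot
    simp only [Finset.mem_Icc] at hu hnot
    have hvj : v j0 < u := by have := hv j0; omega
    unfold aFormula
    rw [if_neg (by push_neg; exact ⟨j0, by show ((v j0:ℤ) - (u:ℤ)) < 0; omega⟩), mul_zero]
  have step1 : ∑ u ∈ Finset.Icc i n,
        (n.choose u : ℤ) * aFormula k (n - u) (fun j => (v j : ℤ) - u)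
      = ∑ u ∈ Finset.Icc i (n - M), ∑ l ∈ Finset.Icc M (n - u),
          (n.choose u : ℤ) * ((-1:ℤ)^((n-u)+l) * (((n-u).choose l : ℕ) : ℤ) *
            ∏ j, ((l.choose (n - v j) : ℤ))) := by
    rw [← Finset.sum_subset (Finset.Icc_subset_Icc_right (Nat.sub_le n M)) hzero1]
    refine Finset.sum_congr rfl fun u hu => ?_
    simp only [Finset.mem_Icc] at hu
    have huv : ∀ j, u ≤ v j := fun j => by have h1 := hMle j; have h2 := hv j; omega
    unfold aFormula
    rw [if_pos (fun j => by show (0:ℤ) ≤ (v j:ℤ) - (u:ℤ); have := huv j; omega), Finset.mul_sum]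
    have hsub : Finset.Icc M (n-u) ⊆ Finset.range (n-u+1) := by
      intro l hl
      simp only [Finset.mem_Icc, Finset.mem_range] at *
      omega
    have hz : ∀ l ∈ Finset.range (n-u+1), l ∉ Finset.Icc M (n-u) →
        (n.choose u : ℤ) * ((-1:ℤ)^((n-u) + l) * (((n-u).choose l : ℕ) : ℤ) *
          ∏ j, zchoose (l:ℤ) (((n-u : ℕ):ℤ) - ((v j : ℤ) - (u:ℤ)))) = 0 := by
      intro l hl hlnot
      simp only [Finset.mem_range, Finset.mem_Icc] at hl hlnot
      have hlM : l < M := by omega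
      have harg : ((n-u : ℕ):ℤ) - ((v j0 : ℤ) - (u:ℤ)) = ((n - v j0 : ℕ) : ℤ) := by
        have := huv j0; have := hv j0; omega
      rw [Finset.prod_eq_zero (Finset.mem_univ j0) ?_]
      · ring
      · rw [harg, ← hj0, zchoose_natCast]
        simp [Nat.choose_eq_zero_of_lt hlM]
    rw [← Finset.sum_subset hsub hz]
    refine Finset.sum_congr rfl fun l hl => ?_
    congr 2
    refine Finset.prod_congr rfl fun j _ => ?_
    have harg : ((n-u:ℕ):ℤ) - ((v j:ℤ) - (u:ℤ)) = ((n - v j : ℕ):ℤ) := by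
      have := huv j; have := hv j; omega
    rw [harg, zchoose_natCast]
  have hswap : ∀ (u l : ℕ), (u ∈ Finset.Icc i (n - M) ∧ l ∈ Finset.Icc M (n - u)) ↔
      (u ∈ Finset.Icc i (n - l) ∧ l ∈ Finset.Icc M (n - i)) := by
    intro u l
    simp only [Finset.mem_Icc]
    omega
  rw [step1, Finset.sum_comm' hswap]
  refine Finset.sum_congr rfl fun l hl => ?_
  simp only [Finset.mem_Icc] at hl
  obtain ⟨hMl, hlni⟩ := hl
  have hln : l ≤ n := by omega
  have hiln : i ≤ n - l := by omega
  have hterm : ∀ u ∈ Finset.Icc i (n-l),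
      (n.choose u : ℤ) * ((-1:ℤ)^((n-u)+l) * (((n-u).choose l : ℕ):ℤ) *
        ∏ j, ((l.choose (n - v j) : ℤ)))
      = ((-1:ℤ)^(n+l) * (n.choose l : ℤ) * ∏ j, ((l.choose (n - v j) : ℤ))) *
          ((-1:ℤ)^u * (((n-l).choose u : ℕ):ℤ)) := by
    intro u hu
    simp only [Finset.mem_Icc] at hu
    have hul : u + l ≤ n := by omega
    have hchz : (n.choose u : ℤ) * ((n-u).choose l : ℤ)
        = (n.choose l : ℤ) * ((n-l).choose u : ℤ) := by exact_mod_cast choose_helper hul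
    have hsign : (-1:ℤ)^((n-u)+l) = (-1)^(n+l) * (-1)^u := by
      rw [← pow_add]
      exact negpow_congr (by omega)
    rw [hsign]
    linear_combination ((-1:ℤ)^(n+l) * (-1:ℤ)^u * ∏ j, ((l.choose (n - v j) : ℤ))) * hchz
  rw [Finset.sum_congr rfl hterm, ← Finset.mul_sum]
  have hS : ∑ u ∈ Finset.Icc i (n-l), (-1:ℤ)^u * (((n-l).choose u : ℕ):ℤ)
      = (-1:ℤ)^(n-l) * zchoose (((n-l:ℕ):ℤ) - 1) ((n-l : ℕ):ℤ)
        - ∑ u ∈ Finset.range i, (-1:ℤ)^u * (((n-l).choose u:ℕ):ℤ) := by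
    rw [← Finset.Ico_add_one_right_eq_Icc, Finset.sum_Ico_eq_sub _ (by omega : i ≤ n-l+1),
      alt_sum_choose]
  rw [hS]
  have hcast1 : ((n-l:ℕ):ℤ) - 1 = (n:ℤ) - (l:ℤ) - 1 := by omega
  rw [hcast1]
  have claimA : (-1:ℤ)^(n+l) * ((-1:ℤ)^(n-l) * zchoose ((n:ℤ)-(l:ℤ)-1) ((n-l:ℕ):ℤ))
      = (-1:ℤ)^l * ((-1:ℤ)^M * zchoose ((n:ℤ)-(l:ℤ)-1) ((n:ℤ)-(M:ℤ))) := by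
    have h2 : (n:ℤ) - (M:ℤ) = ((n-M : ℕ):ℤ) := by omega
    rcases Nat.lt_or_ge l n with hlt | hge
    · have h3 : (n:ℤ) - (l:ℤ) - 1 = ((n-l-1 : ℕ):ℤ) := by omega
      rw [h2, h3, zchoose_natCast, zchoose_natCast,
        Nat.choose_eq_zero_of_lt (by omega), Nat.choose_eq_zero_of_lt (by omega)]
      simp
    · have hln' : l = n := by omega
      subst hln'
      have h3 : (l:ℤ) - (l:ℤ) - 1 = -1 := by ring
      rw [h2, h3, show ((l-l:ℕ):ℤ) = ((0:ℕ):ℤ) by norm_num,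
        zchoose_neg_one_left, zchoose_neg_one_left]
      simp only [← pow_add]
      exact negpow_congr (by omega)
  have claimB : (-1:ℤ)^(n+l) * (- (∑ u ∈ Finset.range i, (-1:ℤ)^u * (((n-l).choose u:ℕ):ℤ)))
      = (-1:ℤ)^l * ((-1:ℤ)^(n-i) * zchoose ((n:ℤ)-(l:ℤ)-1) ((i:ℤ)-1)) := by
    rcases Nat.eq_zero_or_pos i with hi0 | hipos
    · subst hi0
      rw [zchoose_neg_right _ (by norm_num : ((0:ℕ):ℤ)-1 < 0)]
      simp
    · obtain ⟨i', rfl⟩ : ∃ i', i = i' + 1 := ⟨i-1, by omega⟩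
      rw [alt_sum_choose (n-l) i']
      have h3 : ((n-l:ℕ):ℤ) - 1 = (n:ℤ) - (l:ℤ) - 1 := by omega
      have h4 : ((i'+1:ℕ):ℤ) - 1 = ((i':ℕ):ℤ) := by push_cast; ring
      rw [h3, h4]
      have hsg : (-1:ℤ)^(n+l) * (-(-1:ℤ)^i') = (-1:ℤ)^l * (-1:ℤ)^(n-(i'+1)) := by
        have h5 : (-(-1:ℤ)^i') = (-1:ℤ)^(i'+1) := by rw [pow_succ]; ring
        rw [h5, ← pow_add, ← pow_add]
        exact negpow_congr (by omega)
      linear_combination zchoose ((n:ℤ)-(l:ℤ)-1) ((i':ℕ):ℤ) * hsg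
  linear_combination ((n.choose l : ℤ) * ∏ j, ((l.choose (n - v j) : ℤ))) * claimA
    + ((n.choose l : ℤ) * ∏ j, ((l.choose (n - v j) : ℤ))) * claimB
end

section
/- Let n, k ≥ 1, 0 ≤ v_j ≤ n, and 0 ≤ i. In the formal power series ring ℤ[[t_1,…,t_k]], with f(t) = (1+t_1)⋯(1+t_k), the coefficient of t_1^{v_1}⋯t_k^{v_k} in ∑_{u=0}^{i} C(n,u)·(f(t) − t_1⋯t_k)^{n−u}·(t_1⋯t_k)^u equals the number of k-tuples (U_1,…,U_k) of subsets of {1,…,n} with |U_j| = v_j for all j and |∩_{j=1}^{k} U_j| ≤ i. -/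
open Finset MvPolynomial

namespace CdfAux

/-- monomial for a subset of variables -/
noncomputable def mm (k : ℕ) (S : Finset (Fin k)) : MvPolynomial (Fin k) ℤ := ∏ j ∈ S, X j

lemma f_eq (k : ℕ) :
    (∏ j, (1 + X j) : MvPolynomial (Fin k) ℤ) = ∑ S ∈ (univ : Finset (Fin k)).powerset, mm k S := by
  simp_rw [add_comm (1 : MvPolynomial (Fin k) ℤ)]
  rw [Finset.prod_add]
  simp [mm]

lemma fT_eq (k : ℕ) :
    (∏ j, (1 + X j) : MvPolynomial (Fin k) ℤ) - ∏ j, X j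
      = ∑ S ∈ ((univ : Finset (Fin k)).powerset).erase univ, mm k S := by
  have h : (∏ j, (1 + X j) : MvPolynomial (Fin k) ℤ)
      = mm k univ + ∑ S ∈ ((univ : Finset (Fin k)).powerset).erase univ, mm k S := by
    rw [f_eq, Finset.add_sum_erase]
    simp
  rw [h, mm]
  ring

lemma keyA (n k : ℕ) (A : Finset (Fin n)) :
    ((∏ j, (1 + X j) : MvPolynomial (Fin k) ℤ) - ∏ j, X j) ^ (Aᶜ.card) *
      (∏ j, (X j : MvPolynomial (Fin k) ℤ)) ^ A.card
    = ∑ g ∈ Fintype.piFinset (fun e =>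
        if e ∈ A then ({(univ : Finset (Fin k))} : Finset (Finset (Fin k)))
        else ((univ : Finset (Fin k)).powerset).erase univ),
        ∏ e, mm k (g e) := by
  rw [← Finset.prod_univ_sum]
  rw [← Finset.prod_mul_prod_compl A]
  have h1 : ∀ e ∈ A, (∑ S ∈ (if e ∈ A then ({(univ : Finset (Fin k))} : Finset (Finset (Fin k)))
      else ((univ : Finset (Fin k)).powerset).erase univ), mm k S) = ∏ j, (X j : MvPolynomial (Fin k) ℤ) := by
    intro e he
    rw [if_pos he]
    simp [mm]
  have h2 : ∀ e ∈ Aᶜ, (∑ S ∈ (if e ∈ A then ({(univ : Finset (Fin k))} : Finset (Finset (Fin k)))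
      else ((univ : Finset (Fin k)).powerset).erase univ), mm k S)
      = (∏ j, (1 + X j) : MvPolynomial (Fin k) ℤ) - ∏ j, X j := by
    intro e he
    rw [if_neg (by simpa using he), fT_eq]
  rw [Finset.prod_congr rfl h1, Finset.prod_congr rfl h2]
  rw [Finset.prod_const, Finset.prod_const]
  ring

lemma fiber_eq (n k : ℕ) (A : Finset (Fin n)) :
    Fintype.piFinset (fun e =>
        if e ∈ A then ({(univ : Finset (Fin k))} : Finset (Finset (Fin k)))
        else ((univ : Finset (Fin k)).powerset).erase univ)
      = Finset.filter (fun g : Fin n → Finset (Fin k) =>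
          (univ.filter fun e => g e = univ) = A) Finset.univ := by
  ext g
  simp only [Fintype.mem_piFinset, mem_filter, mem_univ, true_and]
  constructor
  · intro h
    ext e
    simp only [mem_filter, mem_univ, true_and]
    specialize h e
    by_cases he : e ∈ A
    · rw [if_pos he] at h
      simp only [Finset.mem_singleton] at h
      simp [h, he]
    · rw [if_neg he] at h
      simp only [Finset.mem_erase, Finset.mem_powerset] at h
      constructor
      · intro hg; exact absurd hg h.1
      · intro hg; exact absurd hg he
  · intro h e
    have h' : ∀ e, g e = univ ↔ e ∈ A := by
      intro e'
      rw [← h]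
      simp
    by_cases he : e ∈ A
    · rw [if_pos he]
      simp [(h' e).mpr he]
    · rw [if_neg he]
      simp only [Finset.mem_erase, Finset.mem_powerset]
      exact ⟨fun hg => he ((h' e).mp hg), Finset.subset_univ _⟩

lemma prodmm (n k : ℕ) (g : Fin n → Finset (Fin k)) :
    (∏ e, mm k (g e)) = ∏ j, (X j : MvPolynomial (Fin k) ℤ) ^ (univ.filter fun e => j ∈ g e).card := by
  unfold mm
  have h1 : ∀ e, (∏ j ∈ g e, (X j : MvPolynomial (Fin k) ℤ))
      = ∏ j, (if j ∈ g e then (X j : MvPolynomial (Fin k) ℤ) else 1) := by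
    intro e
    rw [Finset.prod_ite_mem]
    simp
  simp_rw [h1]
  rw [Finset.prod_comm]
  congr 1
  ext j
  rw [← Finset.prod_filter, Finset.prod_const]

lemma coeffP (n k : ℕ) (v : Fin k → ℕ) (g : Fin n → Finset (Fin k)) :
    MvPolynomial.coeff (Finsupp.equivFunOnFinite.symm v) (∏ e, mm k (g e))
      = if (fun j => (univ.filter fun e => j ∈ g e).card) = v then (1 : ℤ) else 0 := by
  classical
  rw [prodmm]
  set c : Fin k → ℕ := fun j => (univ.filter fun e => j ∈ g e).card with hc
  have hmon : (∏ j, (X j : MvPolynomial (Fin k) ℤ) ^ c j)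
      = monomial (Finsupp.equivFunOnFinite.symm c) 1 := by
    rw [monomial_eq, C_1, one_mul]
    rw [Finsupp.prod_fintype _ _ (fun i => pow_zero _)]
    rfl
  rw [hmon, coeff_monomial]
  congr 1
  simp only [eq_iff_iff]
  constructor
  · intro h
    have := Finsupp.equivFunOnFinite.symm.injective h
    exact this
  · intro h; rw [h]

end CdfAux

open Finset MvPolynomial CdfAux

set_option linter.unusedVariables false in
open Finset MvPolynomial in
theorem cdf_generating_function (n k i : ℕ) (hn : 1 ≤ n) (hk : 1 ≤ k)
    (v : Fin k → ℕ) (hv : ∀ j, v j ≤ n) (hi : 0 ≤ i) :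
    MvPolynomial.coeff (Finsupp.equivFunOnFinite.symm v)
        (∑ u ∈ Finset.range (i + 1),
          (n.choose u : MvPolynomial (Fin k) ℤ) *
            ((∏ j, (1 + MvPolynomial.X j)) - ∏ j, MvPolynomial.X j) ^ (n - u) *
            (∏ j, MvPolynomial.X j) ^ u) =
      ((Finset.univ.filter (fun U : Fin k → Finset (Fin n) =>
          (∀ j, (U j).card = v j) ∧ (Finset.univ.inf U).card ≤ i)).card : ℤ) := by
  classical
  -- Step 1: rewrite each term as a sum over subsets A of card u
  have step1 : ∀ u ∈ Finset.range (i + 1),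
      (n.choose u : MvPolynomial (Fin k) ℤ) *
        ((∏ j, (1 + X j)) - ∏ j, X j) ^ (n - u) * (∏ j, X j) ^ u
      = ∑ A ∈ Finset.filter (fun A : Finset (Fin n) => A.card = u) Finset.univ,
          ∑ g ∈ Finset.filter (fun g : Fin n → Finset (Fin k) =>
              (univ.filter fun e => g e = univ) = A) Finset.univ,
            ∏ e, mm k (g e) := by
    intro u hu
    have hterm : ∀ A ∈ Finset.filter (fun A : Finset (Fin n) => A.card = u) Finset.univ,
        (∑ g ∈ Finset.filter (fun g : Fin n → Finset (Fin k) =>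
              (univ.filter fun e => g e = univ) = A) Finset.univ,
            ∏ e, mm k (g e))
        = ((∏ j, (1 + X j) : MvPolynomial (Fin k) ℤ) - ∏ j, X j) ^ (n - u) * (∏ j, X j) ^ u := by
      intro A hA
      simp only [mem_filter, mem_univ, true_and] at hA
      rw [← fiber_eq, ← keyA, Finset.card_compl, Fintype.card_fin, hA]
    rw [Finset.sum_congr rfl hterm, Finset.sum_const]
    have hcard : (Finset.filter (fun A : Finset (Fin n) => A.card = u) Finset.univ).card
        = n.choose u := by
      rw [← Finset.powerset_univ, ← Finset.powersetCard_eq_filter, Finset.card_powersetCard,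
        Finset.card_univ, Fintype.card_fin]
    rw [hcard, nsmul_eq_mul]
    push_cast
    ring
  rw [Finset.sum_congr rfl step1]
  -- Step 2: combine the double sum into a single sum over g
  have step2 : (∑ u ∈ Finset.range (i + 1),
      ∑ A ∈ Finset.filter (fun A : Finset (Fin n) => A.card = u) Finset.univ,
        ∑ g ∈ Finset.filter (fun g : Fin n → Finset (Fin k) =>
            (univ.filter fun e => g e = univ) = A) Finset.univ,
          ∏ e, mm k (g e))
      = ∑ g ∈ Finset.filter (fun g : Fin n → Finset (Fin k) =>
          (univ.filter fun e => g e = univ).card ≤ i) Finset.univ,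
          ∏ e, mm k (g e) := by
    set G := Finset.filter (fun g : Fin n → Finset (Fin k) =>
        (univ.filter fun e => g e = univ).card ≤ i) Finset.univ with hG
    set B := Finset.filter (fun A : Finset (Fin n) => A.card ≤ i) Finset.univ with hB
    have inner : ∀ u ∈ Finset.range (i+1),
        (∑ A ∈ Finset.filter (fun A : Finset (Fin n) => A.card = u) Finset.univ,
          ∑ g ∈ Finset.filter (fun g : Fin n → Finset (Fin k) =>
              (univ.filter fun e => g e = univ) = A) Finset.univ,
            ∏ e, mm k (g e))
        = ∑ A ∈ Finset.filter (fun A => A.card = u) B,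
          ∑ g ∈ Finset.filter (fun g : Fin n → Finset (Fin k) =>
              (univ.filter fun e => g e = univ) = A) G,
            ∏ e, mm k (g e) := by
      intro u hu
      simp only [Finset.mem_range] at hu
      have hBu : Finset.filter (fun A => A.card = u) B
          = Finset.filter (fun A : Finset (Fin n) => A.card = u) Finset.univ := by
        rw [hB, Finset.filter_filter]
        apply Finset.filter_congr
        intro A _
        constructor
        · exact fun h => h.2
        · exact fun h => ⟨h ▸ Nat.lt_succ_iff.mp hu, h⟩
      rw [hBu]
      apply Finset.sum_congr rfl
      intro A hA
      simp only [mem_filter, mem_univ, true_and] at hA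
      congr 1
      rw [hG, Finset.filter_filter]
      apply Finset.filter_congr
      intro g _
      constructor
      · intro h
        exact ⟨by rw [h, hA]; exact Nat.lt_succ_iff.mp hu, h⟩
      · exact fun h => h.2
    rw [Finset.sum_congr rfl inner]
    rw [Finset.sum_fiberwise_of_maps_to (t := Finset.range (i+1)) (g := Finset.card)]
    · exact Finset.sum_fiberwise_of_maps_to (fun g hg => by
        simp only [hB, mem_filter, mem_univ, true_and]
        simp only [hG, mem_filter, mem_univ, true_and] at hg
        exact hg) _
    · intro A hA
      simp only [hB, mem_filter, mem_univ, true_and] at hA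
      simp only [Finset.mem_range]
      omega
  rw [step2]
  -- Step 3: take the coefficient
  rw [MvPolynomial.coeff_sum]
  have step3 : ∀ g ∈ Finset.filter (fun g : Fin n → Finset (Fin k) =>
      (univ.filter fun e => g e = univ).card ≤ i) Finset.univ,
      MvPolynomial.coeff (Finsupp.equivFunOnFinite.symm v) (∏ e, mm k (g e))
      = if (fun j => (univ.filter fun e => j ∈ g e).card) = v then (1 : ℤ) else 0 :=
    fun g _ => coeffP n k v g
  rw [Finset.sum_congr rfl step3, Finset.sum_boole, Finset.filter_filter]
  -- Step 4: the bijection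
  congr 1
  apply Finset.card_nbij' (fun g j => univ.filter (fun e => j ∈ g e))
    (fun U e => univ.filter (fun j => e ∈ U j))
  · intro g hg
    simp only [Finset.mem_coe, mem_filter, mem_univ, true_and] at hg ⊢
    obtain ⟨h1, h2⟩ := hg
    constructor
    · intro j
      exact congrFun h2 j
    · have hinf : (Finset.univ.inf fun j => univ.filter (fun e => j ∈ g e))
          = univ.filter (fun e => g e = univ) := by
        ext e
        simp only [Finset.mem_inf, mem_filter, mem_univ, true_and]
        constructor
        · intro h
          exact Finset.eq_univ_iff_forall.mpr (fun j => h j trivial)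
        · intro h j _
          rw [h]; exact mem_univ j
      rw [hinf]
      exact h1
  · intro U hU
    simp only [Finset.mem_coe, mem_filter, mem_univ, true_and] at hU ⊢
    obtain ⟨h1, h2⟩ := hU
    constructor
    · have hinf : (univ.filter fun e => (univ.filter fun j => e ∈ U j) = univ)
          = Finset.univ.inf U := by
        ext e
        simp only [Finset.mem_inf, mem_filter, mem_univ, true_and]
        constructor
        · intro h j _
          have := Finset.eq_univ_iff_forall.mp h j
          simpa using this
        · intro h
          exact Finset.eq_univ_iff_forall.mpr (fun j => by simp [h j trivial])
      rw [hinf]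
      exact h2
    · funext j
      have huj : (univ.filter fun e => e ∈ U j) = U j := by ext e; simp
      rw [huj]
      exact h1 j
  · intro g _
    funext e
    ext j
    simp
  · intro U _
    funext j
    ext e
    simp
end

section
/- For positive integers m and nonnegative integers w_1, w_2 ≤ m, the number of pairs (W_1, W_2) of subsets of {1,…,m} with |W_1| = w_1, |W_2| = w_2, and W_1 ∩ W_2 = ∅ equals C(m, w_1)·C(m−w_1, w_2), and this equals ∑_{l=0}^{m} (−1)^{m+l} C(m,l)·C(l, m−w_1)·C(l, m−w_2). -/
open Finset

-- finite difference lemma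
lemma diffS (n : ℕ) : ∀ a b : ℕ,
    ∑ j ∈ Finset.range (n+1), (-1:ℤ)^(n+j) * (n.choose j) * ((a+j).choose b)
      = if n ≤ b then ((a.choose (b-n) : ℤ)) else 0 := by
  induction n with
  | zero => intro a b; simp
  | succ n ih =>
    intro a b
    have key : ∑ j ∈ Finset.range (n+2), (-1:ℤ)^(n+1+j) * ((n+1).choose j) * ((a+j).choose b)
        = (∑ j ∈ Finset.range (n+1), (-1:ℤ)^(n+j) * (n.choose j) * ((a+1+j).choose b))
          - ∑ j ∈ Finset.range (n+1), (-1:ℤ)^(n+j) * (n.choose j) * ((a+j).choose b) := by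
      rw [Finset.sum_range_succ' (fun j => (-1:ℤ)^(n+1+j) * ((n+1).choose j) * ((a+j).choose b))]
      have h1 : ∀ i ∈ Finset.range (n+1),
          (-1:ℤ)^(n+1+(i+1)) * ((n+1).choose (i+1)) * ((a+(i+1)).choose b)
            = (-1:ℤ)^(n+i) * (n.choose i) * ((a+1+i).choose b)
              + (-1:ℤ)^(n+i) * (n.choose (i+1)) * ((a+1+i).choose b) := by
        intro i _
        have : (n+1).choose (i+1) = n.choose i + n.choose (i+1) := Nat.choose_succ_succ n i
        rw [this]
        push_cast
        have hpow : (-1:ℤ)^(n+1+(i+1)) = (-1:ℤ)^(n+i) := by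
          rw [show n+1+(i+1) = (n+i)+2 by ring, pow_add]; ring
        rw [hpow, show a+(i+1) = a+1+i by ring]
        ring
      rw [Finset.sum_congr rfl h1, Finset.sum_add_distrib]
      -- now: S(n,a+1,b) + ∑ (-1)^(n+i) C(n,i+1) C(a+1+i,b) + f 0 = S(n,a+1,b) - S(n,a,b)
      have h2 : (∑ i ∈ Finset.range (n+1), (-1:ℤ)^(n+i) * (n.choose (i+1)) * ((a+1+i).choose b))
          + (-1:ℤ)^(n+1+0) * ((n+1).choose 0) * ((a+0).choose b)
          = - ∑ j ∈ Finset.range (n+1), (-1:ℤ)^(n+j) * (n.choose j) * ((a+j).choose b) := by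
        rw [← Finset.sum_neg_distrib]
        rw [Finset.sum_range_succ' (fun j => -((-1:ℤ)^(n+j) * (n.choose j) * ((a+j).choose b)))]
        rw [Finset.sum_range_succ (fun i => (-1:ℤ)^(n+i) * (n.choose (i+1)) * ((a+1+i).choose b))]
        simp only [Nat.choose_succ_self, Nat.cast_zero, mul_zero, zero_mul, add_zero]
        congr 1
        · apply Finset.sum_congr rfl
          intro i hi
          have hpow : (-1:ℤ)^(n+(i+1)) = -(-1:ℤ)^(n+i) := by
            rw [show n+(i+1) = (n+i)+1 by ring, pow_succ]; ring
          rw [hpow, show a+(i+1) = a+1+i by ring]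
          ring
        · simp [pow_succ]
      rw [add_assoc, h2]
      ring
    rw [key, ih, ih]
    rcases lt_trichotomy n b with h | h | h
    · rw [if_pos h.le, if_pos h.le, if_pos (show n+1 ≤ b by omega)]
      obtain ⟨k, hk⟩ : ∃ k, b - n = k + 1 := ⟨b - n - 1, by omega⟩
      have h2 : b - (n+1) = k := by omega
      rw [hk, h2, Nat.choose_succ_succ (a) k]
      push_cast
      ring
    · subst h
      rw [if_pos le_rfl, if_pos le_rfl, if_neg (by omega)]
      simp
    · rw [if_neg (by omega), if_neg (by omega), if_neg (by omega)]
      ring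

lemma count_part (m w₁ w₂ : ℕ) (h₁ : w₁ ≤ m) :
    (Finset.univ.filter (fun W : Finset (Fin m) × Finset (Fin m) =>
        W.1.card = w₁ ∧ W.2.card = w₂ ∧ W.1 ∩ W.2 = ∅)).card =
      m.choose w₁ * (m - w₁).choose w₂ := by
  have hset : Finset.univ.filter (fun W : Finset (Fin m) × Finset (Fin m) =>
        W.1.card = w₁ ∧ W.2.card = w₂ ∧ W.1 ∩ W.2 = ∅)
      = (Finset.univ.powersetCard w₁).biUnion
          (fun A => ((Aᶜ).powersetCard w₂).image (fun B => (A, B))) := by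
    ext ⟨A, B⟩
    simp only [mem_filter, mem_univ, true_and, mem_biUnion, mem_powersetCard, mem_image,
      Prod.mk.injEq]
    constructor
    · rintro ⟨hA, hB, hAB⟩
      refine ⟨A, ⟨subset_univ A, hA⟩, B, ⟨?_, hB⟩, rfl, rfl⟩
      rw [Finset.subset_compl_comm]
      intro x hx
      simp only [Finset.mem_compl]
      intro hxB
      have : x ∈ A ∩ B := Finset.mem_inter.2 ⟨hx, hxB⟩
      simp [hAB] at this
    · rintro ⟨A', ⟨-, hA'⟩, B', ⟨hB'sub, hB'⟩, rfl, rfl⟩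
      refine ⟨hA', hB', ?_⟩
      ext x
      simp only [Finset.mem_inter, Finset.notMem_empty, iff_false, not_and]
      intro hx hxB
      have := hB'sub hxB
      simp [Finset.mem_compl, hx] at this
  have hdisj : ∀ A ∈ (Finset.univ : Finset (Fin m)).powersetCard w₁, ∀ A' ∈ (Finset.univ : Finset (Fin m)).powersetCard w₁,
      A ≠ A' → Disjoint (((Aᶜ).powersetCard w₂).image (fun B => (A, B)))
        (((A'ᶜ).powersetCard w₂).image (fun B => (A', B))) := by
    intro A hA A' hA' hne
    rw [Finset.disjoint_left]
    rintro ⟨x, y⟩ hx hy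
    simp only [Finset.mem_image] at hx hy
    obtain ⟨B, -, hB⟩ := hx
    obtain ⟨B', -, hB'⟩ := hy
    exact hne ((congrArg Prod.fst hB).trans (congrArg Prod.fst hB').symm)
  have hterm : ∀ A ∈ (Finset.univ : Finset (Fin m)).powersetCard w₁,
        (((Aᶜ).powersetCard w₂).image (fun B => (A, B))).card = (m - w₁).choose w₂ := by
      intro A hA
      rw [Finset.card_image_of_injective _ (fun B B' h => (Prod.ext_iff.1 h).2),
        Finset.card_powersetCard, Finset.card_compl]
      simp only [Fintype.card_fin]
      congr 2
      exact (Finset.mem_powersetCard.1 hA).2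
  rw [hset]
  refine (Finset.card_biUnion hdisj).trans ?_
  rw [Finset.sum_congr rfl hterm, Finset.sum_const, Finset.card_powersetCard,
    Finset.card_univ, Fintype.card_fin, smul_eq_mul]

lemma sum_part (m w₁ w₂ : ℕ) (h₁ : w₁ ≤ m) (h₂ : w₂ ≤ m) :
    ((m.choose w₁ * (m - w₁).choose w₂ : ℤ)) =
      ∑ l ∈ Finset.range (m + 1),
        (-1 : ℤ) ^ (m + l) * (m.choose l) * (l.choose (m - w₁)) * (l.choose (m - w₂)) := by
  obtain ⟨a, ha_def⟩ : ∃ a, a = m - w₁ := ⟨_, rfl⟩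
  obtain ⟨b, hb_def⟩ : ∃ b, b = m - w₂ := ⟨_, rfl⟩
  rw [← ha_def, ← hb_def]
  have ha : a ≤ m := by omega
  set f : ℕ → ℤ := fun l => (-1 : ℤ) ^ (m + l) * (m.choose l) * (l.choose a) * (l.choose b)
    with hf
  have hsplit : ∑ l ∈ Finset.range (m+1), f l
      = ∑ l ∈ Finset.range a, f l + ∑ l ∈ Finset.Ico a (m+1), f l :=
    (Finset.sum_range_add_sum_Ico f (by omega)).symm
  have hz : ∑ l ∈ Finset.range a, f l = 0 := by
    apply Finset.sum_eq_zero
    intro l hl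
    have : l.choose a = 0 := Nat.choose_eq_zero_of_lt (Finset.mem_range.1 hl)
    simp [hf, this]
  have hIco : ∑ l ∈ Finset.Ico a (m+1), f l = ∑ j ∈ Finset.range ((m-a)+1), f (a+j) := by
    have hr : m + 1 - a = m - a + 1 := by omega
    rw [Finset.sum_Ico_eq_sum_range, hr]
  have hterm : ∀ j ∈ Finset.range ((m-a)+1),
      f (a+j) = (m.choose a : ℤ) * ((-1:ℤ)^((m-a)+j) * ((m-a).choose j) * ((a+j).choose b)) := by
    intro j hj
    have hjm : j ≤ m - a := Nat.lt_succ_iff.1 (Finset.mem_range.1 hj)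
    have hkn : a + j ≤ m := by omega
    have hmul : m.choose (a+j) * (a+j).choose a = m.choose a * (m-a).choose j := by
      have := Nat.choose_mul (n := m) (Nat.le_add_right a j)
      simpa [Nat.add_sub_cancel_left] using this
    have hpow : (-1:ℤ)^(m+(a+j)) = (-1:ℤ)^((m-a)+j) := by
      have : m + (a+j) = ((m-a)+j) + 2*a := by omega
      rw [this, pow_add, pow_mul]
      simp
    simp only [hf, hpow]
    rw [show ((-1:ℤ)^((m-a)+j) * (m.choose (a+j)) * ((a+j).choose a) * ((a+j).choose b))
        = (-1:ℤ)^((m-a)+j) * ((m.choose (a+j) * (a+j).choose a : ℕ) : ℤ) * ((a+j).choose b) by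
      push_cast; ring]
    rw [hmul]
    push_cast
    ring
  rw [hsplit, hz, zero_add, hIco, Finset.sum_congr rfl hterm, ← Finset.mul_sum, diffS]
  subst ha_def
  subst hb_def
  have hma : m - (m - w₁) = w₁ := by omega
  rw [hma, Nat.choose_symm h₁]
  by_cases hcase : w₁ ≤ m - w₂
  · rw [if_pos hcase]
    have he : (m - w₂) - w₁ = (m - w₁) - w₂ := by omega
    have hw2 : w₂ ≤ m - w₁ := by omega
    rw [he, Nat.choose_symm hw2]
  · rw [if_neg hcase]
    have hlt : m - w₁ < w₂ := by omega
    rw [Nat.choose_eq_zero_of_lt hlt]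
    simp

open Finset in
theorem disjoint_pair_count (m w₁ w₂ : ℕ) (hm : 0 < m) (h₁ : w₁ ≤ m) (h₂ : w₂ ≤ m) :
    (Finset.univ.filter (fun W : Finset (Fin m) × Finset (Fin m) =>
        W.1.card = w₁ ∧ W.2.card = w₂ ∧ W.1 ∩ W.2 = ∅)).card =
      m.choose w₁ * (m - w₁).choose w₂ ∧
    ((m.choose w₁ * (m - w₁).choose w₂ : ℤ)) =
      ∑ l ∈ Finset.range (m + 1),
        (-1 : ℤ) ^ (m + l) * (m.choose l) * (l.choose (m - w₁)) * (l.choose (m - w₂)) := by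
  exact ⟨count_part m w₁ w₂ h₁, sum_part m w₁ w₂ h₁ h₂⟩
end
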